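/- arXiv:1209.1422 — 2 statements merged into one kernel-verified Lean document; each statement's English description precedes it below -/
import Mathlib

section
/- Isolation followed by coisolation reconstructs a tagged copy of a multi-action: for a multi-action α over actions in 𝔸, set A ⊆ 𝔸, and injective functions s, r : 𝔸 → Act with disjoint images fresh for 𝔸, define isol(α) by replacing each a ∈ A with a ⊔ s(a) and each b ∉ A with r(b), and coisol(α) by replacing each a ∈ A with r(a) and each b ∉ A with b ⊔ s(b). Then isol(α) ⊔ coisol(α) = (⊔_{a in the support of α} n_a copies of (s(a) ⊔ r(a))) ⊔ α, where n_a is the multiplicity of a in α; in particular the remainder α shares no actions with any s(a) ⊔ r(a). -/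
open Classical in
/-- The `A`-isolation of a multi-action: replace each `a ∈ A` by `a ⊔ s(a)`
and each `b ∉ A` by `r(b)`. -/
noncomputable def isol {Act : Type*} (A : Set Act) (s r : Act → Act)
    (α : Multiset Act) : Multiset Act :=
  α.bind fun a => if a ∈ A then {a, s a} else {r a}

open Classical in
/-- The `A`-coisolation of a multi-action: replace each `a ∈ A` by `r(a)`
and each `b ∉ A` by `b ⊔ s(b)`. -/
noncomputable def coisol {Act : Type*} (A : Set Act) (s r : Act → Act)
    (α : Multiset Act) : Multiset Act :=
  α.bind fun a => if a ∈ A then {r a} else {a, s a}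

/-! Isolation and coisolation send each action `a` to complementary halves of `a ⊔ s(a) ⊔ r(a)`,
so their sum is computed pointwise under `Multiset.bind`. -/

theorem isol_add_coisol {Act : Type*} (A : Set Act) (s r : Act → Act) (α : Multiset Act) :
    isol A s r α + coisol A s r α = (α.bind fun a => ({s a, r a} : Multiset Act)) + α := by
  classical
  have halves (a : Act) :
      ((if a ∈ A then {a, s a} else {r a}) + (if a ∈ A then {r a} else {a, s a}) :
        Multiset Act) = {s a, r a} + {a} := by
    split_ifs <;> simp only [Multiset.insert_eq_cons, ← Multiset.singleton_add] <;> abel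
  rw [isol, coisol, ← Multiset.bind_add, Multiset.bind_congr fun a _ => halves a,
    Multiset.bind_add, Multiset.bind_singleton, Multiset.map_id']

theorem Multiset.disjoint_pair_of_forall_mem {X : Type*} {S : Set X} {m : Multiset X}
    (hm : ∀ x ∈ m, x ∈ S) {y z : X} (hy : y ∉ S) (hz : z ∉ S) :
    Disjoint m ({y, z} : Multiset X) := by
  rw [Multiset.insert_eq_cons, Multiset.disjoint_cons_right, Multiset.disjoint_singleton]
  exact ⟨fun hym => hy (hm y hym), fun hzm => hz (hm z hzm)⟩

theorem stmt9_general {Act : Type*} (𝔸 A : Set Act) (s r : Act → Act)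
    (hfresh : ((s '' 𝔸) ∪ (r '' 𝔸)) ∩ 𝔸 = ∅)
    (α : Multiset Act) (hα : ∀ a ∈ α, a ∈ 𝔸) :
    isol A s r α + coisol A s r α =
        (α.bind fun a => ({s a, r a} : Multiset Act)) + α ∧
      ∀ a ∈ 𝔸, Disjoint α ({s a, r a} : Multiset Act) := by
  refine ⟨isol_add_coisol A s r α, fun a ha => ?_⟩
  have fresh {x : Act} (hx : x ∈ s '' 𝔸 ∪ r '' 𝔸) : x ∉ 𝔸 := fun hx𝔸 =>
    (Set.eq_empty_iff_forall_notMem.mp hfresh) x ⟨hx, hx𝔸⟩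
  exact Multiset.disjoint_pair_of_forall_mem hα (fresh (.inl ⟨a, ha, rfl⟩))
    (fresh (.inr ⟨a, ha, rfl⟩))

/-- Isolation joined with coisolation reconstructs a tagged copy of the
multi-action: `isol(α) ⊔ coisol(α) = (⊔_{a ∈ α} s(a) ⊔ r(a)) ⊔ α`, and the
remainder `α` shares no actions with any `s(a) ⊔ r(a)`. -/
theorem stmt9 {Act : Type*} (𝔸 A : Set Act) (s r : Act → Act)
    (hA : A ⊆ 𝔸)
    (hs : Set.InjOn s 𝔸) (hr : Set.InjOn r 𝔸)
    (himg : (s '' 𝔸) ∩ (r '' 𝔸) = ∅)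
    (hfresh : ((s '' 𝔸) ∪ (r '' 𝔸)) ∩ 𝔸 = ∅)
    (α : Multiset Act) (hα : ∀ a ∈ α, a ∈ 𝔸) :
    isol A s r α + coisol A s r α =
        (α.bind fun a => ({s a, r a} : Multiset Act)) + α ∧
      ∀ a ∈ 𝔸, Disjoint α ({s a, r a} : Multiset Act) :=
  stmt9_general 𝔸 A s r hfresh α hα
end

section
/- Blocking a fresh unpaired tag deadlocks the isolation: with isol defined as replacing a ∈ A by a ⊔ s(a) and b ∉ A by r(b) on a nonempty τ-free multi-action α with support in 𝔸, every multi-action isol(α) contains an action from img(s) ∪ img(r) but never contains both s(a) and r(a) for the same a; hence applying the blocking operator ∂_{img(s) ∪ img(r)} after the communication Γ_{ {s(a)⊔r(a)→tau} } to isol(α) yields deadlock (the multi-action is forbidden). -/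
open Classical in
/-- The communication function for a set of rules `C`. -/
noncomputable def ΓS {Act : Type*} [DecidableEq Act]
    (C : Set (Multiset Act × Act)) (α : Multiset Act) : Multiset Act :=
  if h : ∃ rule ∈ C, rule.1 ≠ 0 ∧ rule.1 ≤ α then
    h.choose.2 ::ₘ ΓS C (α - h.choose.1)
  else α
termination_by Multiset.card α
decreasing_by
  obtain ⟨-, hne, hle⟩ := h.choose_spec
  have hpos : 0 < Multiset.card h.choose.1 := Multiset.card_pos.2 hne
  have h1 := Multiset.card_sub hle
  have h2 := Multiset.card_le_card hle
  omega

open Classical in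
/-- The blocking operator `∂_B`: a multi-action containing an action of `B`
is forbidden (deadlock, `none`); otherwise it is left unchanged. -/
noncomputable def block {Act : Type*} (B : Set Act) (α : Multiset Act) :
    Option (Multiset Act) :=
  if ∀ x ∈ α, x ∉ B then some α else none

/-! Every `a ∈ α` contributes `s a` or `r a` to `isol α`, so it meets `img s ∪ img r`. Since the
tags are fresh and the two images are disjoint, the only source of `s a` in `isol α` is `a ∈ A`
and the only source of `r a` is `a ∉ A`. Hence no rule `s a ⊔ r a → tau` applies, `Γ` leaves
`isol α` unchanged, and blocking the tags deadlocks it. -/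

theorem ΓS_eq_self_of_not_exists {Act : Type*} [DecidableEq Act]
    {C : Set (Multiset Act × Act)} {α : Multiset Act}
    (h : ¬ ∃ rule ∈ C, rule.1 ≠ 0 ∧ rule.1 ≤ α) : ΓS C α = α := by
  rw [ΓS, dif_neg h]

theorem block_eq_none_of_mem {Act : Type*} {B : Set Act} {α : Multiset Act} {x : Act}
    (hx : x ∈ α) (hxB : x ∈ B) : block B α = none := by
  rw [block, if_neg]
  exact fun h => h x hx hxB

section Isol

variable {Act : Type*} {𝔸 A : Set Act} {s r : Act → Act} {α : Multiset Act}

theorem mem_isol {x : Act} :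
    x ∈ isol A s r α ↔ ∃ b ∈ α, (b ∈ A ∧ (x = b ∨ x = s b)) ∨ (b ∉ A ∧ x = r b) := by
  classical
  simp only [isol, Multiset.mem_bind]
  refine exists_congr fun b => and_congr_right fun _ => ?_
  by_cases hb : b ∈ A <;> simp [hb]

theorem s_mem_isol {a : Act} (ha : a ∈ α) (haA : a ∈ A) : s a ∈ isol A s r α :=
  mem_isol.2 ⟨a, ha, .inl ⟨haA, .inr rfl⟩⟩

theorem r_mem_isol {a : Act} (ha : a ∈ α) (haA : a ∉ A) : r a ∈ isol A s r α :=
  mem_isol.2 ⟨a, ha, .inr ⟨haA, rfl⟩⟩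

theorem exists_mem_isol_mem_image_union (hne : α ≠ 0) (hα : ∀ a ∈ α, a ∈ 𝔸) :
    ∃ x ∈ isol A s r α, x ∈ s '' 𝔸 ∪ r '' 𝔸 := by
  obtain ⟨a, ha⟩ := Multiset.exists_mem_of_ne_zero hne
  by_cases haA : a ∈ A
  · exact ⟨s a, s_mem_isol ha haA, .inl ⟨a, hα a ha, rfl⟩⟩
  · exact ⟨r a, r_mem_isol ha haA, .inr ⟨a, hα a ha, rfl⟩⟩

theorem mem_of_s_mem_isol (hs : Set.InjOn s 𝔸) (hsr : Disjoint (s '' 𝔸) (r '' 𝔸))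
    (hs𝔸 : Disjoint (s '' 𝔸) 𝔸) (hα : ∀ b ∈ α, b ∈ 𝔸) {a : Act} (ha : a ∈ 𝔸)
    (h : s a ∈ isol A s r α) : a ∈ A := by
  obtain ⟨b, hb, ⟨hbA, rfl | hab⟩ | ⟨-, hab⟩⟩ := mem_isol.1 h
  · exact absurd (hα _ hb) (Set.disjoint_left.1 hs𝔸 ⟨a, ha, rfl⟩)
  · rwa [hs ha (hα b hb) hab]
  · exact Set.disjoint_left.1 hsr ⟨a, ha, rfl⟩ ⟨b, hα b hb, hab.symm⟩ |>.elim

theorem not_mem_of_r_mem_isol (hr : Set.InjOn r 𝔸) (hsr : Disjoint (s '' 𝔸) (r '' 𝔸))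
    (hr𝔸 : Disjoint (r '' 𝔸) 𝔸) (hα : ∀ b ∈ α, b ∈ 𝔸) {a : Act} (ha : a ∈ 𝔸)
    (h : r a ∈ isol A s r α) : a ∉ A := by
  obtain ⟨b, hb, ⟨-, hab | hab⟩ | ⟨hbA, hab⟩⟩ := mem_isol.1 h
  · exact absurd (hab ▸ hα b hb) (Set.disjoint_left.1 hr𝔸 ⟨a, ha, rfl⟩)
  · exact Set.disjoint_left.1 hsr ⟨b, hα b hb, hab.symm⟩ ⟨a, ha, rfl⟩ |>.elim
  · rwa [hr ha (hα b hb) hab]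

theorem not_s_mem_isol_and_r_mem_isol (hs : Set.InjOn s 𝔸) (hr : Set.InjOn r 𝔸)
    (hsr : Disjoint (s '' 𝔸) (r '' 𝔸)) (hfresh : Disjoint (s '' 𝔸 ∪ r '' 𝔸) 𝔸)
    (hα : ∀ b ∈ α, b ∈ 𝔸) {a : Act} (ha : a ∈ 𝔸) :
    ¬ (s a ∈ isol A s r α ∧ r a ∈ isol A s r α) := by
  rw [Set.disjoint_union_left] at hfresh
  exact fun ⟨hsa, hra⟩ => not_mem_of_r_mem_isol hr hsr hfresh.2 hα ha hra
    (mem_of_s_mem_isol hs hsr hfresh.1 hα ha hsa)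

end Isol

theorem stmt15_general {Act : Type*} [DecidableEq Act] (𝔸 A : Set Act)
    (s r : Act → Act) (tau : Act)
    (hs : Set.InjOn s 𝔸) (hr : Set.InjOn r 𝔸)
    (himg : (s '' 𝔸) ∩ (r '' 𝔸) = ∅)
    (hfresh : ((s '' 𝔸) ∪ (r '' 𝔸)) ∩ 𝔸 = ∅)
    (α : Multiset Act) (hne : α ≠ 0) (hα : ∀ a ∈ α, a ∈ 𝔸) :
    (∃ x ∈ isol A s r α, x ∈ (s '' 𝔸) ∪ (r '' 𝔸)) ∧
      (∀ a ∈ 𝔸, ¬ (s a ∈ isol A s r α ∧ r a ∈ isol A s r α)) ∧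
      block ((s '' 𝔸) ∪ (r '' 𝔸))
        (ΓS {rule | ∃ a ∈ 𝔸, rule = (({s a, r a} : Multiset Act), tau)}
          (isol A s r α)) = none := by
  rw [← Set.disjoint_iff_inter_eq_empty] at himg hfresh
  have unpaired : ∀ a ∈ 𝔸, ¬ (s a ∈ isol A s r α ∧ r a ∈ isol A s r α) :=
    fun a ha => not_s_mem_isol_and_r_mem_isol hs hr himg hfresh hα ha
  have no_rule : ¬ ∃ rule ∈ {rule | ∃ a ∈ 𝔸, rule = (({s a, r a} : Multiset Act), tau)},
      rule.1 ≠ 0 ∧ rule.1 ≤ isol A s r α := by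
    rintro ⟨-, ⟨a, ha, rfl⟩, -, hle⟩
    exact unpaired a ha ⟨Multiset.mem_of_le hle (by simp), Multiset.mem_of_le hle (by simp)⟩
  obtain ⟨x, hx, hxB⟩ := exists_mem_isol_mem_image_union (A := A) (s := s) (r := r) hne hα
  exact ⟨⟨x, hx, hxB⟩, unpaired, by
    rw [ΓS_eq_self_of_not_exists no_rule]
    exact block_eq_none_of_mem hx hxB⟩

/-- Blocking a fresh unpaired tag deadlocks the isolation: `isol(α)` always
contains an action from `img(s) ∪ img(r)` but never both `s(a)` and `r(a)`
for the same `a`; hence blocking `img(s) ∪ img(r)` after the communication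
`{s(a) ⊔ r(a) → tau : a ∈ 𝔸}` yields deadlock. -/
theorem stmt15 {Act : Type*} [DecidableEq Act] (𝔸 A : Set Act)
    (s r : Act → Act) (tau : Act)
    (hA : A ⊆ 𝔸)
    (hs : Set.InjOn s 𝔸) (hr : Set.InjOn r 𝔸)
    (himg : (s '' 𝔸) ∩ (r '' 𝔸) = ∅)
    (hfresh : ((s '' 𝔸) ∪ (r '' 𝔸)) ∩ 𝔸 = ∅)
    (α : Multiset Act) (hne : α ≠ 0) (hα : ∀ a ∈ α, a ∈ 𝔸) :
    (∃ x ∈ isol A s r α, x ∈ (s '' 𝔸) ∪ (r '' 𝔸)) ∧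
      (∀ a ∈ 𝔸, ¬ (s a ∈ isol A s r α ∧ r a ∈ isol A s r α)) ∧
      block ((s '' 𝔸) ∪ (r '' 𝔸))
        (ΓS {rule | ∃ a ∈ 𝔸, rule = (({s a, r a} : Multiset Act), tau)}
          (isol A s r α)) = none :=
  stmt15_general 𝔸 A s r tau hs hr himg hfresh α hne hα
end
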